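/- For all formulas φ, ψ, if the frame (W,R) is a preorder in which every point sees a depth-1 point, and the set of depth-1 points validates □ψ → □φ, then (W,R) validates ◇□ψ → ◇□φ. -/
import Mathlib


inductive Formula : Type where
  | var : ℕ → Formula
  | bot : Formula
  | imp : Formula → Formula → Formula
  | dia : Formula → Formula

def Formula.neg (φ : Formula) : Formula := .imp φ .bot
def Formula.box (φ : Formula) : Formula := Formula.neg (.dia (Formula.neg φ))
def Formula.or (φ ψ : Formula) : Formula := .imp (Formula.neg φ) ψ
def Formula.and (φ ψ : Formula) : Formula := Formula.neg (.imp φ (Formula.neg ψ))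

/-- Kripke semantics. -/
def Sat {W : Type*} (R : W → W → Prop) (V : ℕ → W → Prop) : W → Formula → Prop
  | x, .var n => V n x
  | _, .bot => False
  | x, .imp φ ψ => Sat R V x φ → Sat R V x ψ
  | x, .dia φ => ∃ y, R x y ∧ Sat R V y φ

theorem sat_transfer {W : Type*} (R : W → W → Prop) (htrans : Transitive R)
    (V : ℕ → W → Prop) :
    ∀ (χ : Formula) (y : {y : W // ∀ z, R y z → R z y}),
      Sat R V y.val χ ↔
        Sat (fun a b : {y : W // ∀ z, R y z → R z y} => R a b)
          (fun n a => V n a.val) y χ := by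
  intro χ
  induction χ with
  | var n => intro y; rfl
  | bot => intro y; rfl
  | imp α β ihα ihβ =>
      intro y
      simp only [Sat, ihα y, ihβ y]
  | dia α ih =>
      intro y
      constructor
      · rintro ⟨z, hyz, hz⟩
        have hzd : ∀ w, R z w → R w z := by
          intro w hzw
          have hyw : R y.val w := htrans hyz hzw
          have hwy : R w y.val := y.2 w hyw
          exact htrans hwy hyz
        exact ⟨⟨z, hzd⟩, hyz, (ih ⟨z, hzd⟩).mp hz⟩
      · rintro ⟨z, hyz, hz⟩
        exact ⟨z.val, hyz, (ih z).mpr hz⟩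

/-- If every point of the preorder `(W,R)` sees a depth-1 point, and the subframe of
depth-1 points validates `□ψ → □φ`, then `(W,R)` validates `◇□ψ → ◇□φ`. -/
theorem stmt18 {W : Type*} (R : W → W → Prop)
    (hrefl : Reflexive R) (htrans : Transitive R)
    (hsee : ∀ x : W, ∃ y, R x y ∧ ∀ z, R y z → R z y) (φ ψ : Formula)
    (hsub : ∀ (V : ℕ → {y : W // ∀ z, R y z → R z y} → Prop)
      (x : {y : W // ∀ z, R y z → R z y}),
      Sat (fun a b : {y : W // ∀ z, R y z → R z y} => R a b) V x
        (Formula.imp (Formula.box ψ) (Formula.box φ))) :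
    ∀ (V : ℕ → W → Prop) (x : W),
      Sat R V x (Formula.imp (Formula.dia (Formula.box ψ))
        (Formula.dia (Formula.box φ))) := by
  intro V x
  rintro ⟨u, hxu, hu⟩
  obtain ⟨y, huy, hyd⟩ := hsee u
  -- y satisfies □ψ in the full frame
  have hyψ : Sat R V y (Formula.box ψ) := by
    rintro ⟨z, hyz, hz⟩
    exact hu ⟨z, htrans huy hyz, hz⟩
  -- transfer to subframe, apply hsub, transfer back
  have hyφ : Sat R V y (Formula.box φ) := by
    have h1 := (sat_transfer R htrans V (Formula.box ψ) ⟨y, hyd⟩).mp hyψ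
    have h2 := hsub (fun n a => V n a.val) ⟨y, hyd⟩ h1
    exact (sat_transfer R htrans V (Formula.box φ) ⟨y, hyd⟩).mpr h2
  exact ⟨y, htrans hxu huy, hyφ⟩
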